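/- arXiv:1312.0076 — 4 statements merged into one kernel-verified Lean document; each statement's English description precedes it below -/
import Mathlib

section
/- The function g(t) = t + 2e^{−t} + t·e^{−t} − 2 is strictly positive for all t > 0. -/
open Real

/-!
Since `exp x > 1 + x` for `x ≠ 0`, the derivative `g' t = 1 - (1 + t) e^{-t}` is positive for
`t > 0`, so `g` is strictly increasing on `[0, ∞)`; as `g 0 = 0`, it is positive for `t > 0`.
-/

noncomputable def g (t : ℝ) : ℝ := t + 2 * exp (-t) + t * exp (-t) - 2

lemma one_add_mul_exp_neg_lt_one {x : ℝ} (hx : x ≠ 0) : (1 + x) * exp (-x) < 1 := by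
  rw [exp_neg, ← div_eq_mul_inv, div_lt_one (exp_pos x)]
  linarith [add_one_lt_exp hx]

lemma hasDerivAt_g (x : ℝ) : HasDerivAt g (1 - (1 + x) * exp (-x)) x := by
  have hexp : HasDerivAt (fun x : ℝ => exp (-x)) (-exp (-x)) x := by
    simpa using (hasDerivAt_neg x).exp
  exact ((((hasDerivAt_id' x).add (hexp.const_mul 2)).add
    ((hasDerivAt_id' x).mul hexp)).sub_const 2).congr_deriv (by ring)

lemma strictMonoOn_g : StrictMonoOn g (Set.Ici 0) := by
  refine strictMonoOn_of_deriv_pos (convex_Ici 0)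
    (fun x _ => (hasDerivAt_g x).continuousAt.continuousWithinAt) ?_
  intro x hx
  rw [interior_Ici] at hx
  rw [(hasDerivAt_g x).deriv, sub_pos]
  exact one_add_mul_exp_neg_lt_one hx.ne'

theorem stmt_2 (t : ℝ) (ht : 0 < t) :
    0 < t + 2 * Real.exp (-t) + t * Real.exp (-t) - 2 := by
  simpa [g] using strictMonoOn_g Set.self_mem_Ici ht.le ht
end

section
/- Let λ, m, β > 0, λ ≤ m/(βe), c ∈ [κ₁, κ₂] as above, and u₀, v continuous with 0 ≤ v_s(x) ≤ c for all s, x and 0 ≤ u₀(x) ≤ c. Then the function (Φv)_t(x) = exp(−m∫₀^t e^{−(v_s*φ)(x)} ds)·u₀(x) + λ∫₀^t exp(−m∫_τ^t e^{−(v_s*φ)(x)} ds) dτ satisfies 0 ≤ (Φv)_t(x) ≤ c for all t ≥ 0, x ∈ ℝ^d. -/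
/-!
The rate `r = m e^{-(v_s * φ)(x)}` satisfies `λ ≤ c r`: indeed `0 ≤ v_s * φ ≤ βc`, and
`λ/m ≤ c e^{-βc}` because `κ ↦ log κ - βκ` is concave, so its value at `c ∈ [κ₁, κ₂]` dominates
its values at `κ₁, κ₂`, where `κ e^{-βκ} = λ/m`. Since `∂_τ e^{-∫_τ^t r} = r(τ) e^{-∫_τ^t r}`,
`λ ∫₀ᵗ e^{-∫_τ^t r} dτ ≤ c ∫₀ᵗ r(τ) e^{-∫_τ^t r} dτ = c (1 - e^{-∫₀ᵗ r})`, and adding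
`e^{-∫₀ᵗ r} u₀ ≤ c e^{-∫₀ᵗ r}` gives the bound `c`.
-/

open Real Set MeasureTheory intervalIntegral

theorem min_le_mul_exp_neg_mul {β κ₁ κ₂ c : ℝ} (hκ₁ : 0 < κ₁) (hc : c ∈ Icc κ₁ κ₂) :
    min (κ₁ * exp (-(β * κ₁))) (κ₂ * exp (-(β * κ₂))) ≤ c * exp (-(β * c)) := by
  have hconc : ConcaveOn ℝ (Ioi 0) fun κ => log κ - β * κ :=
    strictConcaveOn_log_Ioi.concaveOn.sub ((β • LinearMap.id).convexOn (convex_Ioi 0))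
  have hexp : ∀ κ, 0 < κ → exp (log κ - β * κ) = κ * exp (-(β * κ)) := fun κ hκ => by
    rw [sub_eq_add_neg, exp_add, exp_log hκ]
  have hc₀ : 0 < c := hκ₁.trans_le hc.1
  rw [← hexp κ₁ hκ₁, ← hexp κ₂ (hc₀.trans_le hc.2), ← hexp c hc₀, ← exp_monotone.map_min]
  exact exp_monotone (hconc.min_le_of_mem_Icc hκ₁ (hc₀.trans_le hc.2) hc)

theorem hasDerivAt_exp_neg_integral_left {r : ℝ → ℝ} (hr : Continuous r) (t τ : ℝ) :
    HasDerivAt (fun τ => exp (-∫ s in τ..t, r s)) (r τ * exp (-∫ s in τ..t, r s)) τ := by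
  simpa [mul_comm] using (integral_hasDerivAt_left (hr.intervalIntegrable τ t)
    (hr.stronglyMeasurableAtFilter _ _) hr.continuousAt).neg.exp

theorem continuous_exp_neg_integral_left {r : ℝ → ℝ} (hr : Continuous r) (t : ℝ) :
    Continuous fun τ => exp (-∫ s in τ..t, r s) :=
  continuous_iff_continuousAt.2 fun τ => (hasDerivAt_exp_neg_integral_left hr t τ).continuousAt

theorem integral_mul_exp_neg_integral {r : ℝ → ℝ} (hr : Continuous r) (a t : ℝ) :
    ∫ τ in a..t, r τ * exp (-∫ s in τ..t, r s) = 1 - exp (-∫ s in a..t, r s) := by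
  rw [integral_eq_sub_of_hasDerivAt (fun τ _ => hasDerivAt_exp_neg_integral_left hr t τ)
    ((hr.mul (continuous_exp_neg_integral_left hr t)).intervalIntegrable a t)]
  simp

theorem exp_neg_integral_mul_add_le {r : ℝ → ℝ} (hr : Continuous r) {lam c u a t : ℝ}
    (hlam : ∀ τ, lam ≤ c * r τ) (hu : u ≤ c) (hat : a ≤ t) :
    exp (-∫ s in a..t, r s) * u + lam * ∫ τ in a..t, exp (-∫ s in τ..t, r s) ≤ c := by
  have hE := continuous_exp_neg_integral_left hr t
  have hint : lam * ∫ τ in a..t, exp (-∫ s in τ..t, r s) ≤ c * (1 - exp (-∫ s in a..t, r s)) := by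
    rw [← integral_mul_exp_neg_integral hr, ← intervalIntegral.integral_const_mul,
      ← intervalIntegral.integral_const_mul]
    refine integral_mono_on hat ((hE.const_mul lam).intervalIntegrable a t)
      ((continuous_const.mul (hr.mul hE)).intervalIntegrable a t) fun τ _ => ?_
    rw [← mul_assoc]
    exact mul_le_mul_of_nonneg_right (hlam τ) (exp_pos _).le
  calc exp (-∫ s in a..t, r s) * u + lam * ∫ τ in a..t, exp (-∫ s in τ..t, r s)
      ≤ exp (-∫ s in a..t, r s) * c + c * (1 - exp (-∫ s in a..t, r s)) :=
        add_le_add (mul_le_mul_of_nonneg_left hu (exp_pos _).le) hint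
    _ = c := by ring

section WeightedIntegral

variable {α : Type*} [MeasurableSpace α] {μ : Measure α} {f : α → ℝ}

theorem integral_mul_le_mul_integral (hf : Integrable f μ) (hf₀ : ∀ y, 0 ≤ f y) {w : α → ℝ}
    {c : ℝ} (hw : AEStronglyMeasurable w μ) (hw₀ : ∀ y, 0 ≤ w y) (hwc : ∀ y, w y ≤ c) :
    ∫ y, f y * w y ∂μ ≤ c * ∫ y, f y ∂μ := by
  have hfw : Integrable (fun y => f y * w y) μ :=
    hf.mul_bdd hw (ae_of_all _ fun y => by rw [norm_of_nonneg (hw₀ y)]; exact hwc y)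
  rw [← MeasureTheory.integral_const_mul]
  exact integral_mono hfw (hf.const_mul c) fun y => by
    rw [mul_comm c]; exact mul_le_mul_of_nonneg_left (hwc y) (hf₀ y)

theorem continuous_integral_mul [TopologicalSpace α] [OpensMeasurableSpace α] {X : Type*}
    [TopologicalSpace X] [FirstCountableTopology X] {v : X → α → ℝ} (hv : Continuous ↿v) {C : ℝ} (hvC : ∀ s y, |v s y| ≤ C)
    (hf : Integrable f μ) : Continuous fun s => ∫ y, f y * v s y ∂μ :=
  continuous_of_dominated (bound := fun y => ‖f y‖ * C)
    (fun s => hf.aestronglyMeasurable.mul (hv.comp (Continuous.prodMk_right s)).aestronglyMeasurable)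
    (fun s => ae_of_all _ fun y => by
      rw [norm_mul]; exact mul_le_mul_of_nonneg_left (hvC s y) (norm_nonneg _))
    (hf.norm.mul_const C)
    (ae_of_all _ fun y => continuous_const.mul (hv.comp (continuous_id.prodMk continuous_const)))

end WeightedIntegral

theorem stmt_14_general (d : ℕ) (φ : (Fin d → ℝ) → ℝ)
    (hφ_int : Integrable φ) (hφ_pos : ∀ x, 0 ≤ φ x)
    (β : ℝ) (hβ : β = ∫ x, φ x)
    (lam m κ₁ κ₂ c : ℝ) (hlam : 0 < lam) (hm : 0 < m)
    (h₁ : lam = m * κ₁ * Real.exp (-(β * κ₁)))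
    (h₂ : lam = m * κ₂ * Real.exp (-(β * κ₂)))
    (hκ₁ : 0 < κ₁) (hc : c ∈ Set.Icc κ₁ κ₂)
    (u₀ : (Fin d → ℝ) → ℝ) (hu₀ : ∀ x, 0 ≤ u₀ x ∧ u₀ x ≤ c)
    (v : ℝ → (Fin d → ℝ) → ℝ) (hv_cont : Continuous ↿v)
    (hv : ∀ s x, 0 ≤ v s x ∧ v s x ≤ c) :
    ∀ t : ℝ, 0 ≤ t → ∀ x,
      0 ≤ Real.exp (-(m * ∫ s in (0:ℝ)..t, Real.exp (-(∫ y, φ (x - y) * v s y)))) * u₀ x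
            + lam * ∫ τ in (0:ℝ)..t,
                Real.exp (-(m * ∫ s in τ..t, Real.exp (-(∫ y, φ (x - y) * v s y)))) ∧
      Real.exp (-(m * ∫ s in (0:ℝ)..t, Real.exp (-(∫ y, φ (x - y) * v s y)))) * u₀ x
            + lam * ∫ τ in (0:ℝ)..t,
                Real.exp (-(m * ∫ s in τ..t, Real.exp (-(∫ y, φ (x - y) * v s y)))) ≤ c := by
  intro t ht x
  have hc₀ : 0 ≤ c := hκ₁.le.trans hc.1
  have hlam_le : lam ≤ m * (c * exp (-(β * c))) := by
    have hκ : ∀ κ, lam = m * κ * exp (-(β * κ)) → κ * exp (-(β * κ)) = lam / m := fun κ h => by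
      rw [eq_div_iff hm.ne', h]; ring
    have := min_le_mul_exp_neg_mul (β := β) hκ₁ hc
    rwa [hκ κ₁ h₁, hκ κ₂ h₂, min_self, div_le_iff₀' hm] at this
  have hconv_le : ∀ s, ∫ y, φ (x - y) * v s y ≤ c * β := fun s => by
    rw [hβ, ← integral_sub_left_eq_self φ volume x]
    exact integral_mul_le_mul_integral (hφ_int.comp_sub_left x) (fun y => hφ_pos _)
      (hv_cont.comp (Continuous.prodMk_right s)).aestronglyMeasurable
      (fun y => (hv s y).1) (fun y => (hv s y).2)
  have hr : Continuous fun s => m * exp (-∫ y, φ (x - y) * v s y) :=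
    continuous_const.mul (continuous_exp.comp (continuous_integral_mul hv_cont
      (fun s y => abs_le.2 ⟨by linarith [(hv s y).1], (hv s y).2⟩)
      (hφ_int.comp_sub_left x)).neg)
  have hlam_rate : ∀ s, lam ≤ c * (m * exp (-∫ y, φ (x - y) * v s y)) := fun s =>
    calc lam ≤ m * (c * exp (-(β * c))) := hlam_le
      _ ≤ c * (m * exp (-∫ y, φ (x - y) * v s y)) := by
        rw [mul_left_comm]
        gcongr
        linarith [hconv_le s]
  have hpull : ∀ a, m * ∫ s in a..t, exp (-∫ y, φ (x - y) * v s y)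
      = ∫ s in a..t, m * exp (-∫ y, φ (x - y) * v s y) :=
    fun a => (intervalIntegral.integral_const_mul _ _).symm
  simp only [hpull]
  exact ⟨add_nonneg (mul_nonneg (exp_pos _).le (hu₀ x).1)
      (mul_nonneg hlam.le (integral_nonneg ht fun τ _ => (exp_pos _).le)),
    exp_neg_integral_mul_add_le hr hlam_rate (hu₀ x).2 ht⟩

theorem stmt_14 (d : ℕ) (φ : (Fin d → ℝ) → ℝ)
    (hφ_int : Integrable φ) (hφ_pos : ∀ x, 0 ≤ φ x)
    (β : ℝ) (hβ : β = ∫ x, φ x)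
    (lam m κ₁ κ₂ c : ℝ) (hlam : 0 < lam) (hm : 0 < m) (hβpos : 0 < β)
    (hsmall : lam ≤ m / (β * Real.exp 1))
    (h₁ : lam = m * κ₁ * Real.exp (-(β * κ₁)))
    (h₂ : lam = m * κ₂ * Real.exp (-(β * κ₂)))
    (hκ₁ : 0 < κ₁) (hκ : κ₁ ≤ κ₂) (hc : c ∈ Set.Icc κ₁ κ₂)
    (u₀ : (Fin d → ℝ) → ℝ) (hu₀ : ∀ x, 0 ≤ u₀ x ∧ u₀ x ≤ c)
    (v : ℝ → (Fin d → ℝ) → ℝ) (hv_cont : Continuous ↿v)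
    (hv : ∀ s x, 0 ≤ v s x ∧ v s x ≤ c) :
    ∀ t : ℝ, 0 ≤ t → ∀ x,
      0 ≤ Real.exp (-(m * ∫ s in (0:ℝ)..t, Real.exp (-(∫ y, φ (x - y) * v s y)))) * u₀ x
            + lam * ∫ τ in (0:ℝ)..t,
                Real.exp (-(m * ∫ s in τ..t, Real.exp (-(∫ y, φ (x - y) * v s y)))) ∧
      Real.exp (-(m * ∫ s in (0:ℝ)..t, Real.exp (-(∫ y, φ (x - y) * v s y)))) * u₀ x
            + lam * ∫ τ in (0:ℝ)..t,
                Real.exp (-(m * ∫ s in τ..t, Real.exp (-(∫ y, φ (x - y) * v s y)))) ≤ c :=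
  stmt_14_general d φ hφ_int hφ_pos β hβ lam m κ₁ κ₂ c hlam hm h₁ h₂ hκ₁ hc u₀ hu₀ v hv_cont hv
end

section
/- Let λ, m, β, c, T > 0 with λβm·T²/2 + cβm·T < 1. Then the map Φ defined by (Φv)_t(x) = exp(−m∫₀^t e^{−(v_s*φ)(x)} ds)·u₀(x) + λ∫₀^t exp(−m∫_τ^t e^{−(v_s*φ)(x)} ds) dτ is a contraction on the set of continuous functions v: [0,T] → C_b(ℝ^d) with 0 ≤ v ≤ c, with Lipschitz constant λβmT²/2 + cβmT, where u₀ is fixed with 0 ≤ u₀ ≤ c. -/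
open Real Set MeasureTheory intervalIntegral

/-!
Both terms of `Φ` are exponentials of nonpositive quantities, and `a ↦ e^{-a}` is 1-Lipschitz on
`[0, ∞)`, so every difference reduces to a difference of exponents. If `|v - w| ≤ M`, the rates
`e^{-(v_s * φ)(x)}` and `e^{-(w_s * φ)(x)}` differ by at most `βM`, so the survival factors
`exp (-m ∫_τ^t rate)` differ by at most `mβM (t - τ)`. The initial term then contributes `c mβM t`
and the source term `λ ∫_0^t mβM (t - τ) dτ = λ mβM t² / 2`.
-/

lemma Real.abs_exp_neg_sub_exp_neg_le {a b : ℝ} (ha : 0 ≤ a) (hb : 0 ≤ b) :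
    |exp (-a) - exp (-b)| ≤ |a - b| := by
  wlog hba : b ≤ a generalizing a b
  · rw [abs_sub_comm, abs_sub_comm a]
    exact this hb ha (le_of_not_ge hba)
  have hfactor : exp (-b) - exp (-a) = exp (-b) * (1 - exp (-(a - b))) := by
    rw [mul_sub, ← exp_add]; ring_nf
  have hexp_b : exp (-b) ≤ 1 := exp_le_one_iff.2 (by linarith)
  have hexp_ab : exp (-(a - b)) ≤ 1 := exp_le_one_iff.2 (by linarith)
  have htangent : 1 - exp (-(a - b)) ≤ a - b := by linarith [add_one_le_exp (-(a - b))]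
  rw [abs_sub_comm, hfactor, abs_of_nonneg (mul_nonneg (exp_pos _).le (sub_nonneg.2 hexp_ab)),
    abs_of_nonneg (sub_nonneg.2 hba)]
  calc exp (-b) * (1 - exp (-(a - b))) ≤ 1 * (a - b) :=
        mul_le_mul hexp_b htangent (sub_nonneg.2 hexp_ab) zero_le_one
    _ = a - b := one_mul _

section WeightedIntegral

variable {α : Type*} [MeasurableSpace α] {μ : Measure α} {ψ : α → ℝ}

lemma abs_integral_mul_sub_integral_mul_le {f g : α → ℝ} {M : ℝ} (hψ : Integrable ψ μ)
    (hψ0 : ∀ y, 0 ≤ ψ y) (hf : Integrable (fun y => ψ y * f y) μ)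
    (hg : Integrable (fun y => ψ y * g y) μ) (hfg : ∀ y, |f y - g y| ≤ M) :
    |∫ y, ψ y * f y ∂μ - ∫ y, ψ y * g y ∂μ| ≤ (∫ y, ψ y ∂μ) * M := by
  rw [← integral_sub hf hg, ← MeasureTheory.integral_mul_const, ← Real.norm_eq_abs]
  refine norm_integral_le_of_norm_le (hψ.mul_const M) (ae_of_all _ fun y => ?_)
  rw [← mul_sub, norm_mul, Real.norm_eq_abs, Real.norm_eq_abs, abs_of_nonneg (hψ0 y)]
  exact mul_le_mul_of_nonneg_left (hfg y) (hψ0 y)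

lemma continuous_integral_mul_of_abs_le {X : Type*} [TopologicalSpace X]
    [FirstCountableTopology X] {u : X → α → ℝ} {C : ℝ} (hψ : Integrable ψ μ)
    (hu_meas : ∀ s, AEStronglyMeasurable (u s) μ) (hu_cont : ∀ y, Continuous fun s => u s y)
    (huC : ∀ s y, |u s y| ≤ C) :
    Continuous fun s => ∫ y, ψ y * u s y ∂μ := by
  refine continuous_of_dominated (bound := fun y => ‖ψ y‖ * C)
    (fun s => hψ.aestronglyMeasurable.mul (hu_meas s)) (fun s => ae_of_all _ fun y => ?_)
    (hψ.norm.mul_const C) (ae_of_all _ fun y => continuous_const.mul (hu_cont y))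
  rw [norm_mul, Real.norm_eq_abs (u s y)]
  exact mul_le_mul_of_nonneg_left (huC s y) (norm_nonneg _)

lemma abs_exp_neg_integral_mul_sub_le {f g : α → ℝ} {M : ℝ} (hψ : Integrable ψ μ)
    (hψ0 : ∀ y, 0 ≤ ψ y) (hf : Integrable (fun y => ψ y * f y) μ)
    (hg : Integrable (fun y => ψ y * g y) μ) (hf0 : ∀ y, 0 ≤ f y) (hg0 : ∀ y, 0 ≤ g y)
    (hfg : ∀ y, |f y - g y| ≤ M) :
    |exp (-∫ y, ψ y * f y ∂μ) - exp (-∫ y, ψ y * g y ∂μ)| ≤ (∫ y, ψ y ∂μ) * M :=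
  (abs_exp_neg_sub_exp_neg_le (integral_nonneg fun y => mul_nonneg (hψ0 y) (hf0 y))
    (integral_nonneg fun y => mul_nonneg (hψ0 y) (hg0 y))).trans
    (abs_integral_mul_sub_integral_mul_le hψ hψ0 hf hg hfg)

end WeightedIntegral

-- The variation-of-constants solution of `u' = lam - m f u`, `u 0 = u₀`; the paper's `(Φv)_t(x)`
-- is `duhamelSolution lam m (u₀ x) (fun s => exp (-(v_s * φ)(x))) t`.
noncomputable def duhamelSolution (lam m u₀ : ℝ) (f : ℝ → ℝ) (t : ℝ) : ℝ :=
  exp (-(m * ∫ s in (0:ℝ)..t, f s)) * u₀ + lam * ∫ τ in (0:ℝ)..t, exp (-(m * ∫ s in τ..t, f s))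

section Duhamel

variable {f g : ℝ → ℝ} {L m τ t : ℝ}

lemma abs_intervalIntegral_sub_le (hf : IntervalIntegrable f volume τ t)
    (hg : IntervalIntegrable g volume τ t) (hτt : τ ≤ t)
    (hfg : ∀ s ∈ Icc τ t, |f s - g s| ≤ L) :
    |(∫ s in τ..t, f s) - ∫ s in τ..t, g s| ≤ L * (t - τ) := by
  rw [← integral_sub hf hg, ← abs_of_nonneg (sub_nonneg.2 hτt), ← Real.norm_eq_abs]
  refine norm_integral_le_of_norm_le_const fun s hs => hfg s ?_
  rw [uIoc_of_le hτt] at hs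
  exact Ioc_subset_Icc_self hs

lemma abs_exp_neg_integral_sub_le (hm : 0 ≤ m) (hf : IntervalIntegrable f volume τ t)
    (hg : IntervalIntegrable g volume τ t) (hf0 : ∀ s ∈ Icc τ t, 0 ≤ f s)
    (hg0 : ∀ s ∈ Icc τ t, 0 ≤ g s) (hτt : τ ≤ t) (hfg : ∀ s ∈ Icc τ t, |f s - g s| ≤ L) :
    |exp (-(m * ∫ s in τ..t, f s)) - exp (-(m * ∫ s in τ..t, g s))| ≤ m * (L * (t - τ)) := by
  refine (abs_exp_neg_sub_exp_neg_le (mul_nonneg hm (integral_nonneg hτt hf0))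
    (mul_nonneg hm (integral_nonneg hτt hg0))).trans ?_
  rw [← mul_sub, abs_mul, abs_of_nonneg hm]
  exact mul_le_mul_of_nonneg_left (abs_intervalIntegral_sub_le hf hg hτt hfg) hm

lemma continuous_exp_neg_integral (hf : Continuous f) (m t : ℝ) :
    Continuous fun τ => exp (-(m * ∫ s in τ..t, f s)) := by
  simp_rw [integral_symm t]
  exact (continuous_const.mul
    (continuous_primitive (fun a b => hf.intervalIntegrable a b) t).neg).neg.rexp

lemma abs_integral_exp_neg_integral_sub_le (hm : 0 ≤ m) (hf : Continuous f) (hg : Continuous g)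
    (hf0 : ∀ s, 0 ≤ f s) (hg0 : ∀ s, 0 ≤ g s) (ht : 0 ≤ t)
    (hfg : ∀ s ∈ Icc 0 t, |f s - g s| ≤ L) :
    |(∫ τ in (0:ℝ)..t, exp (-(m * ∫ s in τ..t, f s)))
        - ∫ τ in (0:ℝ)..t, exp (-(m * ∫ s in τ..t, g s))| ≤ m * L * t ^ 2 / 2 := by
  have hbound : ∫ τ in (0:ℝ)..t, m * (L * (t - τ)) = m * L * t ^ 2 / 2 := by
    rw [intervalIntegral.integral_const_mul, intervalIntegral.integral_const_mul,
      intervalIntegral.integral_comp_sub_left (fun x => x)]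
    simp
    ring
  rw [← hbound, ← integral_sub ((continuous_exp_neg_integral hf m t).intervalIntegrable 0 t)
    ((continuous_exp_neg_integral hg m t).intervalIntegrable 0 t), ← Real.norm_eq_abs]
  have hbound_int : IntervalIntegrable (fun τ => m * (L * (t - τ))) volume 0 t :=
    (by fun_prop : Continuous fun τ => m * (L * (t - τ))).intervalIntegrable _ _
  refine norm_integral_le_of_norm_le ht (ae_of_all _ fun τ hτ => ?_) hbound_int
  exact abs_exp_neg_integral_sub_le hm (hf.intervalIntegrable τ t) (hg.intervalIntegrable τ t)
    (fun s _ => hf0 s) (fun s _ => hg0 s) hτ.2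
    fun s hs => hfg s ⟨hτ.1.le.trans hs.1, hs.2⟩

lemma abs_duhamelSolution_sub_le {lam u₀ c : ℝ} (hlam : 0 ≤ lam) (hm : 0 ≤ m)
    (hu₀ : 0 ≤ u₀ ∧ u₀ ≤ c) (hf : Continuous f) (hg : Continuous g) (hf0 : ∀ s, 0 ≤ f s)
    (hg0 : ∀ s, 0 ≤ g s) (ht : 0 ≤ t) (hfg : ∀ s ∈ Icc 0 t, |f s - g s| ≤ L) :
    |duhamelSolution lam m u₀ f t - duhamelSolution lam m u₀ g t|
      ≤ (lam * m * t ^ 2 / 2 + c * m * t) * L := by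
  have hL : 0 ≤ L := (abs_nonneg _).trans (hfg 0 ⟨le_rfl, ht⟩)
  have hinitial := abs_exp_neg_integral_sub_le hm (hf.intervalIntegrable 0 t)
    (hg.intervalIntegrable 0 t) (fun s _ => hf0 s) (fun s _ => hg0 s) ht hfg
  have hsource := abs_integral_exp_neg_integral_sub_le hm hf hg hf0 hg0 ht hfg
  unfold duhamelSolution
  calc _ = |(exp (-(m * ∫ s in (0:ℝ)..t, f s)) - exp (-(m * ∫ s in (0:ℝ)..t, g s))) * u₀
        + lam * ((∫ τ in (0:ℝ)..t, exp (-(m * ∫ s in τ..t, f s)))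
          - ∫ τ in (0:ℝ)..t, exp (-(m * ∫ s in τ..t, g s)))| := by ring_nf
    _ ≤ m * (L * (t - 0)) * c + lam * (m * L * t ^ 2 / 2) := by
      refine (abs_add_le _ _).trans (add_le_add ?_ ?_)
      · rw [abs_mul, abs_of_nonneg hu₀.1]
        exact mul_le_mul hinitial hu₀.2 hu₀.1 (by positivity)
      · rw [abs_mul, abs_of_nonneg hlam]
        exact mul_le_mul_of_nonneg_left hsource hlam
    _ = (lam * m * t ^ 2 / 2 + c * m * t) * L := by ring

end Duhamel

theorem stmt_15_general (d : ℕ) (φ : (Fin d → ℝ) → ℝ)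
    (hφ_int : Integrable φ) (hφ_pos : ∀ x, 0 ≤ φ x)
    (β : ℝ) (hβ : β = ∫ x, φ x)
    (lam m c T : ℝ) (hlam : 0 < lam) (hm : 0 < m)
    (u₀ : (Fin d → ℝ) → ℝ) (hu₀ : ∀ x, 0 ≤ u₀ x ∧ u₀ x ≤ c)
    (v w : ℝ → (Fin d → ℝ) → ℝ)
    (hv_cont : Continuous ↿v) (hw_cont : Continuous ↿w)
    (hv : ∀ s x, 0 ≤ v s x ∧ v s x ≤ c) (hw : ∀ s x, 0 ≤ w s x ∧ w s x ≤ c)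
    (M : ℝ) (hM : ∀ s ∈ Set.Icc (0:ℝ) T, ∀ x, |v s x - w s x| ≤ M) :
    ∀ t ∈ Set.Icc (0:ℝ) T, ∀ x,
      |(Real.exp (-(m * ∫ s in (0:ℝ)..t, Real.exp (-(∫ y, φ (x - y) * v s y)))) * u₀ x
          + lam * ∫ τ in (0:ℝ)..t,
              Real.exp (-(m * ∫ s in τ..t, Real.exp (-(∫ y, φ (x - y) * v s y)))))
        - (Real.exp (-(m * ∫ s in (0:ℝ)..t, Real.exp (-(∫ y, φ (x - y) * w s y)))) * u₀ x
          + lam * ∫ τ in (0:ℝ)..t,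
              Real.exp (-(m * ∫ s in τ..t, Real.exp (-(∫ y, φ (x - y) * w s y)))))|
      ≤ (lam * β * m * T ^ 2 / 2 + c * β * m * T) * M := by
  intro t ht x
  have hψ : Integrable fun y => φ (x - y) := hφ_int.comp_sub_left x
  have hψβ : ∫ y, φ (x - y) = β := by rw [integral_sub_left_eq_self, hβ]
  have hβ0 : 0 ≤ β := hβ ▸ integral_nonneg hφ_pos
  have hM0 : 0 ≤ M := (abs_nonneg _).trans (hM t ht x)
  have habs_le {u : ℝ → (Fin d → ℝ) → ℝ} (hu : ∀ s y, 0 ≤ u s y ∧ u s y ≤ c) (s y) :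
      |u s y| ≤ c := abs_le.2 ⟨by linarith [hu s y], (hu s y).2⟩
  have hmeas {u : ℝ → (Fin d → ℝ) → ℝ} (hu : Continuous ↿u) (s) : AEStronglyMeasurable (u s) :=
    (hu.comp (Continuous.prodMk_right s)).aestronglyMeasurable
  have hrate_cont {u : ℝ → (Fin d → ℝ) → ℝ} (hu_cont : Continuous ↿u)
      (hu : ∀ s y, 0 ≤ u s y ∧ u s y ≤ c) : Continuous fun s => exp (-∫ y, φ (x - y) * u s y) :=
    (continuous_integral_mul_of_abs_le hψ (hmeas hu_cont)
      (fun y => hu_cont.comp (Continuous.prodMk_left y)) (habs_le hu)).neg.rexp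
  have hintegrable {u : ℝ → (Fin d → ℝ) → ℝ} (hu_cont : Continuous ↿u)
      (hu : ∀ s y, 0 ≤ u s y ∧ u s y ≤ c) (s) : Integrable fun y => φ (x - y) * u s y :=
    hψ.mul_bdd (hmeas hu_cont s) (ae_of_all _ (habs_le hu s))
  have hrate_sub : ∀ s ∈ Icc 0 t, |exp (-∫ y, φ (x - y) * v s y)
      - exp (-∫ y, φ (x - y) * w s y)| ≤ β * M := fun s hs =>
    hψβ ▸ abs_exp_neg_integral_mul_sub_le hψ (fun y => hφ_pos _) (hintegrable hv_cont hv s)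
      (hintegrable hw_cont hw s) (fun y => (hv s y).1) (fun y => (hw s y).1)
      (hM s ⟨hs.1, hs.2.trans ht.2⟩)
  calc _ ≤ (lam * m * t ^ 2 / 2 + c * m * t) * (β * M) :=
        abs_duhamelSolution_sub_le hlam.le hm.le (hu₀ x) (hrate_cont hv_cont hv)
          (hrate_cont hw_cont hw) (fun _ => (exp_pos _).le) (fun _ => (exp_pos _).le) ht.1
          hrate_sub
    _ = (lam * β * m * t ^ 2 / 2 + c * β * m * t) * M := by ring
    _ ≤ (lam * β * m * T ^ 2 / 2 + c * β * m * T) * M := by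
      have hc : 0 ≤ c := (hu₀ x).1.trans (hu₀ x).2
      gcongr
      exacts [ht.1, ht.2, ht.2]

theorem stmt_15 (d : ℕ) (φ : (Fin d → ℝ) → ℝ)
    (hφ_int : Integrable φ) (hφ_pos : ∀ x, 0 ≤ φ x)
    (β : ℝ) (hβ : β = ∫ x, φ x)
    (lam m c T : ℝ) (hlam : 0 < lam) (hm : 0 < m) (hc : 0 < c) (hT : 0 < T)
    (hK : lam * β * m * T ^ 2 / 2 + c * β * m * T < 1)
    (u₀ : (Fin d → ℝ) → ℝ) (hu₀ : ∀ x, 0 ≤ u₀ x ∧ u₀ x ≤ c)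
    (v w : ℝ → (Fin d → ℝ) → ℝ)
    (hv_cont : Continuous ↿v) (hw_cont : Continuous ↿w)
    (hv : ∀ s x, 0 ≤ v s x ∧ v s x ≤ c) (hw : ∀ s x, 0 ≤ w s x ∧ w s x ≤ c)
    (M : ℝ) (hM : ∀ s ∈ Set.Icc (0:ℝ) T, ∀ x, |v s x - w s x| ≤ M) :
    ∀ t ∈ Set.Icc (0:ℝ) T, ∀ x,
      |(Real.exp (-(m * ∫ s in (0:ℝ)..t, Real.exp (-(∫ y, φ (x - y) * v s y)))) * u₀ x
          + lam * ∫ τ in (0:ℝ)..t,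
              Real.exp (-(m * ∫ s in τ..t, Real.exp (-(∫ y, φ (x - y) * v s y)))))
        - (Real.exp (-(m * ∫ s in (0:ℝ)..t, Real.exp (-(∫ y, φ (x - y) * w s y)))) * u₀ x
          + lam * ∫ τ in (0:ℝ)..t,
              Real.exp (-(m * ∫ s in τ..t, Real.exp (-(∫ y, φ (x - y) * w s y)))))|
      ≤ (lam * β * m * T ^ 2 / 2 + c * β * m * T) * M :=
  stmt_15_general d φ hφ_int hφ_pos β hβ lam m c T hlam hm u₀ hu₀ v w hv_cont hw_cont hv hw M hM
end

section
/- Let μ ∈ ℝ and let (c_k) be a real sequence with c₀ > μ + 1 satisfying the recurrence c_k − ln c_k + μ = c_{k−1}, with each c_k chosen as the larger solution (so c_k > c_{k−1} and c_k → ∞). Then c_k = k·ln k + k·ln ln k − (μ+1)·k + o(k) as k → ∞. -/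
/-!
Everything is driven by the increments `c (k + 1) - c k = log (c (k + 1)) - μ` and the
Stolz–Cesàro principle: two sequences are comparable once their increments are.
The crude bounds `n ≤ c n ≤ 2 n log (c n)` give `log (c n) ~ log n`, so the increments of `c` are
`~ log n`, like those of `n log n`; hence `c n ~ n log n`, i.e.
`log (c n) = log n + log log n + o(1)`.
Up to `o(1)` this is also the increment of `n log n + n log log n - (μ + 1) n`, and Stolz–Cesàro
against `n` turns the `o(1)` difference of increments into the `o(n)` error.
-/

open Real Filter Asymptotics Finset Topology

theorem Asymptotics.IsLittleO.of_succ_sub {E : Type*} [NormedAddCommGroup E] {f : ℕ → E}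
    {g : ℕ → ℝ} (h : (fun k => f (k + 1) - f k) =o[atTop] fun k => g (k + 1) - g k)
    (hg : Monotone g) (hg_top : Tendsto g atTop atTop) : f =o[atTop] g := by
  have hg_norm : Tendsto (norm ∘ g) atTop atTop := tendsto_norm_atTop_atTop.comp hg_top
  have hsum := h.sum_range (fun k => sub_nonneg.2 (hg k.le_succ)) <| by
    simpa only [sum_range_sub] using tendsto_atTop_add_const_right _ (-g 0) hg_top |>.congr
      fun n => (sub_eq_add_neg _ _).symm
  simp only [sum_range_sub] at hsum
  have hg_equiv : (fun n => g n - g 0) ~[atTop] g :=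
    IsEquivalent.refl.sub_isLittleO (isLittleO_const_left.2 (.inr hg_norm))
  simpa using (hsum.trans_isEquivalent hg_equiv).add
    (isLittleO_const_left.2 (.inr hg_norm) : (fun _ => f 0) =o[atTop] g)

theorem Asymptotics.IsEquivalent.of_succ_sub {f g : ℕ → ℝ}
    (h : (fun k => f (k + 1) - f k) ~[atTop] fun k => g (k + 1) - g k)
    (hg : Monotone g) (hg_top : Tendsto g atTop atTop) : f ~[atTop] g := by
  have hdiff : (fun k => (f - g) (k + 1) - (f - g) k)
      = (fun k => f (k + 1) - f k) - fun k => g (k + 1) - g k := by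
    ext k
    simp only [Pi.sub_apply]
    ring
  exact IsLittleO.of_succ_sub (hdiff ▸ h.isLittleO) hg hg_top

theorem monotone_natCast_mul_log : Monotone fun n : ℕ => (n : ℝ) * log n := by
  refine monotone_nat_of_le_succ fun n => ?_
  rcases n.eq_zero_or_pos with rfl | hn
  · simp
  · exact mul_le_mul (by simp) (log_le_log (by positivity) (by simp)) (log_natCast_nonneg n)
      (by positivity)

theorem tendsto_mul_log_add_one_sub_log :
    Tendsto (fun x : ℝ => x * (log (x + 1) - log x)) atTop (𝓝 1) := by
  refine (by simpa using tendsto_mul_log_one_add_div_atTop 1 :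
    Tendsto (fun x : ℝ => x * log (1 + x⁻¹)) atTop (𝓝 1)).congr' ?_
  filter_upwards [eventually_gt_atTop 0] with x hx
  rw [← log_div (by positivity) hx.ne', add_div, div_self hx.ne', one_div, add_comm]

theorem tendsto_mul_log_log_add_one_sub_log_log :
    Tendsto (fun x : ℝ => x * (log (log (x + 1)) - log (log x))) atTop (𝓝 0) := by
  have hbounds : ∀ x : ℝ, 1 < x →
      0 ≤ x * (log (log (x + 1)) - log (log x)) ∧
        x * (log (log (x + 1)) - log (log x)) ≤ (log x)⁻¹ := by
    intro x hx
    have hlog : 0 < log x := log_pos hx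
    have hlog_succ : 0 < log (x + 1) := log_pos (by linarith)
    have hsucc : log (x + 1) - log x ≤ x⁻¹ := by
      rw [← log_div (by linarith) (by linarith)]
      calc log ((x + 1) / x) ≤ (x + 1) / x - 1 := log_le_sub_one_of_pos (by positivity)
        _ = x⁻¹ := by field_simp; ring
    refine ⟨mul_nonneg (by linarith) <| sub_nonneg.2 <|
      log_le_log hlog (log_le_log (by linarith) (by linarith)), ?_⟩
    calc x * (log (log (x + 1)) - log (log x))
        = x * log (log (x + 1) / log x) := by rw [log_div hlog_succ.ne' hlog.ne']
      _ ≤ x * (log (x + 1) / log x - 1) := by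
        gcongr; exact log_le_sub_one_of_pos (by positivity)
      _ = x * (log (x + 1) - log x) / log x := by field_simp
      _ ≤ x * x⁻¹ / log x := by gcongr
      _ = (log x)⁻¹ := by field_simp
  exact tendsto_of_tendsto_of_tendsto_of_le_of_le' tendsto_const_nhds
    tendsto_log_atTop.inv_tendsto_atTop
    ((eventually_gt_atTop 1).mono fun x hx => (hbounds x hx).1)
    ((eventually_gt_atTop 1).mono fun x hx => (hbounds x hx).2)

section Recurrence

variable {μ : ℝ} {c : ℕ → ℝ}

theorem eventually_natCast_le (hstep : ∀ k, c (k + 1) - c k = log (c (k + 1)) - μ)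
    (htop : Tendsto c atTop atTop) : ∀ᶠ n : ℕ in atTop, (n : ℝ) ≤ c n := by
  obtain ⟨N, hN⟩ : ∃ N, ∀ k ≥ N, exp (μ + 2) ≤ c (k + 1) :=
    ((htop.comp (tendsto_add_atTop_nat 1)).eventually_ge_atTop _).exists_forall_of_atTop
  have hinc : ∀ k ≥ N, 2 ≤ c (k + 1) - c k := fun k hk => by
    rw [hstep, le_sub_iff_add_le', le_log_iff_exp_le ((exp_pos _).trans_le (hN k hk))]
    exact hN k hk
  have hlin : ∀ n ≥ N, c N + 2 * ((n : ℝ) - N) ≤ c n := by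
    refine Nat.le_induction (by simp) fun n hn ih => ?_
    push_cast
    linarith [hinc n hn]
  filter_upwards [eventually_ge_atTop N,
    tendsto_natCast_atTop_atTop.eventually_ge_atTop (2 * N - c N)] with n hn hn'
  linarith [hlin n hn]

theorem eventually_le_two_mul_natCast_mul_log
    (hstep : ∀ k, c (k + 1) - c k = log (c (k + 1)) - μ) (htop : Tendsto c atTop atTop) :
    ∀ᶠ n : ℕ in atTop, c n ≤ 2 * n * log (c n) := by
  obtain ⟨N, hN⟩ := (htop.eventually_ge_atTop (max 1 (exp μ))).exists_forall_of_atTop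
  have hpos : ∀ k ≥ N, 0 < c k := fun k hk => by linarith [le_max_left 1 (exp μ), hN k hk]
  have hlog : ∀ k ≥ N, μ ≤ log (c k) := fun k hk =>
    (le_log_iff_exp_le (hpos k hk)).2 ((le_max_right _ _).trans (hN k hk))
  -- on the tail `c` increases, so each increment `log (c (k + 1)) - μ` is at most `log (c n) - μ`
  have hbound : ∀ n ≥ N, c n ≤ c N + ((n : ℝ) - N) * (log (c n) - μ) := by
    refine Nat.le_induction (by simp) fun n hn ih => ?_
    have hlog_le : log (c n) ≤ log (c (n + 1)) :=
      log_le_log (hpos n hn) (by linarith [hstep n, hlog (n + 1) (by omega)])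
    have hnN : (N : ℝ) ≤ n := by exact_mod_cast hn
    have := mul_le_mul_of_nonneg_left (sub_le_sub_right hlog_le μ) (sub_nonneg.2 hnN)
    push_cast
    linarith [hstep n]
  filter_upwards [eventually_ge_atTop (max N 1),
    (tendsto_log_atTop.comp htop).eventually_ge_atTop (|c N| + |μ|)] with n hn hL
  have hnN : (N : ℝ) ≤ n := by exact_mod_cast (le_max_left N 1).trans hn
  have hn1 : (1 : ℝ) ≤ n := by exact_mod_cast (le_max_right N 1).trans hn
  have hLμ : 0 ≤ log (c n) - μ := sub_nonneg.2 (hlog n ((le_max_left N 1).trans hn))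
  simp only [Function.comp_apply] at hL
  calc c n ≤ c N + ((n : ℝ) - N) * (log (c n) - μ) := hbound n ((le_max_left N 1).trans hn)
    _ ≤ n * |c N| + n * (log (c n) + |μ|) := by
      nlinarith [le_abs_self (c N), neg_abs_le μ, abs_nonneg (c N), Nat.cast_nonneg (α := ℝ) N]
    _ ≤ 2 * n * log (c n) := by nlinarith

theorem isEquivalent_log_natCast (hstep : ∀ k, c (k + 1) - c k = log (c (k + 1)) - μ)
    (htop : Tendsto c atTop atTop) :
    (fun n => log (c n)) ~[atTop] fun n : ℕ => log (n : ℝ) := by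
  have hL : Tendsto (fun n => log (c n)) atTop atTop := tendsto_log_atTop.comp htop
  have hsmall : (fun n => log 2 + log (log (c n))) =o[atTop] fun n => log (c n) :=
    (isLittleO_const_left.2 (.inr (tendsto_norm_atTop_atTop.comp hL))).add
      (isLittleO_log_id_atTop.comp_tendsto hL)
  have hclose : (fun n => log (c n) - log n) =O[atTop] fun n => log 2 + log (log (c n)) := by
    refine IsBigO.of_bound' ?_
    filter_upwards [eventually_natCast_le hstep htop,
      eventually_le_two_mul_natCast_mul_log hstep htop, eventually_ge_atTop 1,
      hL.eventually_ge_atTop 1] with n hlow hup hn hL1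
    have hn0 : (0 : ℝ) < n := by exact_mod_cast hn
    have hlow' : log n ≤ log (c n) := log_le_log hn0 hlow
    have hup' : log (c n) ≤ log 2 + log n + log (log (c n)) := by
      have := log_le_log (by linarith) hup
      rwa [log_mul (by positivity) (by linarith), log_mul (by norm_num) hn0.ne'] at this
    have hlog2 : 0 ≤ log 2 := log_nonneg one_le_two
    rw [Real.norm_of_nonneg (by linarith), Real.norm_of_nonneg (by linarith [log_nonneg hL1])]
    linarith
  refine IsEquivalent.symm (IsLittleO.isEquivalent ?_)
  exact (hclose.trans_isLittleO hsmall).neg_left.congr_left fun n => by simp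

theorem isEquivalent_natCast_mul_log (hstep : ∀ k, c (k + 1) - c k = log (c (k + 1)) - μ)
    (htop : Tendsto c atTop atTop) : c ~[atTop] fun n : ℕ => (n : ℝ) * log n := by
  have hlog_top : Tendsto (fun n : ℕ => log (n : ℝ)) atTop atTop :=
    tendsto_log_atTop.comp tendsto_natCast_atTop_atTop
  have hlog_succ_top : Tendsto (fun k : ℕ => log ((k + 1 : ℕ) : ℝ)) atTop atTop :=
    hlog_top.comp (tendsto_add_atTop_nat 1)
  have hc_inc : (fun k => c (k + 1) - c k) ~[atTop] fun k : ℕ => log ((k + 1 : ℕ) : ℝ) := by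
    simp only [hstep]
    exact ((isEquivalent_log_natCast hstep htop).comp_tendsto
      (tendsto_add_atTop_nat 1)).sub_isLittleO
      (isLittleO_const_left.2 (.inr (tendsto_norm_atTop_atTop.comp hlog_succ_top)))
  have hinc : (fun k : ℕ => ((k + 1 : ℕ) : ℝ) * log ((k + 1 : ℕ) : ℝ) - k * log k)
      ~[atTop] fun k : ℕ => log ((k + 1 : ℕ) : ℝ) := by
    refine IsLittleO.isEquivalent ?_
    have h := (tendsto_mul_log_add_one_sub_log.comp tendsto_natCast_atTop_atTop).isBigO_one ℝ
    refine (h.trans_isLittleO ((isLittleO_one_left_iff ℝ).2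
      (tendsto_norm_atTop_atTop.comp hlog_succ_top))).congr_left fun k => ?_
    simp only [Function.comp_apply, Pi.sub_apply, Nat.cast_succ]
    ring
  exact (hc_inc.trans hinc.symm).of_succ_sub monotone_natCast_mul_log
    (tendsto_natCast_atTop_atTop.atTop_mul_atTop₀ hlog_top)

theorem tendsto_log_sub_log_sub_log_log (hstep : ∀ k, c (k + 1) - c k = log (c (k + 1)) - μ)
    (htop : Tendsto c atTop atTop) :
    Tendsto (fun n : ℕ => log (c n) - log n - log (log n)) atTop (𝓝 0) := by
  have hne : ∀ᶠ n : ℕ in atTop, (n : ℝ) * log n ≠ 0 := by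
    filter_upwards [eventually_ge_atTop 2] with n hn
    have hn' : (1 : ℝ) < n := by exact_mod_cast hn
    exact (mul_pos (by linarith) (log_pos hn')).ne'
  have hratio := ((isEquivalent_iff_tendsto_one hne).1
    (isEquivalent_natCast_mul_log hstep htop)).log one_ne_zero
  rw [log_one] at hratio
  refine hratio.congr' ?_
  filter_upwards [eventually_ge_atTop 2, htop.eventually_gt_atTop 0] with n hn hc
  have hn' : (1 : ℝ) < n := by exact_mod_cast hn
  rw [Pi.div_apply, log_div hc.ne' (mul_pos (by linarith) (log_pos hn')).ne',
    log_mul (by linarith) (log_pos hn').ne']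
  ring

end Recurrence

theorem stmt_18_general (μ : ℝ) (c : ℕ → ℝ)
    (hrec : ∀ k : ℕ, 1 ≤ k → c k - Real.log (c k) + μ = c (k - 1))
    (htop : Filter.Tendsto c Filter.atTop Filter.atTop) :
    (fun k : ℕ => c k - ((k : ℝ) * Real.log k + (k : ℝ) * Real.log (Real.log k)
        - (μ + 1) * (k : ℝ))) =o[Filter.atTop] (fun k : ℕ => (k : ℝ)) := by
  have hstep : ∀ k, c (k + 1) - c k = log (c (k + 1)) - μ := fun k => by
    have := hrec (k + 1) k.succ_pos
    rw [Nat.add_sub_cancel] at this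
    linarith
  refine IsLittleO.of_succ_sub ?_ Nat.mono_cast tendsto_natCast_atTop_atTop
  refine ((isLittleO_one_iff ℝ).2 ?_).congr_right fun k => by push_cast; ring
  have hlog := (tendsto_log_sub_log_sub_log_log hstep htop).comp (tendsto_add_atTop_nat 1)
  have hx := tendsto_mul_log_add_one_sub_log.comp tendsto_natCast_atTop_atTop
  have hxx := tendsto_mul_log_log_add_one_sub_log_log.comp tendsto_natCast_atTop_atTop
  -- the increment of `n log n + n log log n - (μ + 1) n` is
  -- `log (n + 1) + log log (n + 1) - μ + o(1)`
  convert (hlog.sub hx).sub hxx |>.add_const 1 using 2 with k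
  · simp only [Function.comp_apply, Nat.cast_succ]
    linarith [hstep k]
  · norm_num

theorem stmt_18 (μ : ℝ) (c : ℕ → ℝ) (h0 : μ + 1 < c 0)
    (hrec : ∀ k : ℕ, 1 ≤ k → c k - Real.log (c k) + μ = c (k - 1))
    (hmono : StrictMono c)
    (htop : Filter.Tendsto c Filter.atTop Filter.atTop) :
    (fun k : ℕ => c k - ((k : ℝ) * Real.log k + (k : ℝ) * Real.log (Real.log k)
        - (μ + 1) * (k : ℝ))) =o[Filter.atTop] (fun k : ℕ => (k : ℝ)) :=
  stmt_18_general μ c hrec htop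
end
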